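/- Let a > 0, n ∈ ℕ, and t ∈ ℝ. Then for all x ∈ ℝ, Σ_{k=0}^{n} ((−n)_k / k!) · C_{n−k}(x; a) · e^{nt} (1−e^{−t})^k = C_n(x; a·e^{−t}). (These are the orthogonal polynomials for the Toda-modified Charlier weight.) -/

import Mathlib

open Finset

/-- Pochhammer symbol `(b)_j = b(b+1)⋯(b+j-1)`. -/
noncomputable def poch (b : ℝ) (j : ℕ) : ℝ := ∏ i ∈ Finset.range j, (b + i)

/-- Charlier polynomial `C_n(x; a)`. -/
noncomputable def charlierC (n : ℕ) (x a : ℝ) : ℝ :=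
  ∑ k ∈ Finset.range (n + 1),
    poch (-(n : ℝ)) k * poch (-x) k / (k.factorial : ℝ) * (-1 / a) ^ k

/-!
With `s = e^{-t}` the factor `e^{nt}` is `s^{-n}`, so the claim is
`∑_k (-n)_k/k! · C_{n-k}(x; a) · (1-s)^k = s^n C_n(x; a s)`.
Expanding `C_{n-k}` and exchanging the two sums, the identity
`(-n)_k (-(n-k))_j = (-n)_{j+k} = (-n)_j (-(n-j))_k` pulls the `j`-th Charlier coefficient
out of the inner sum, which is then the binomial expansion
`∑_k (-(n-j))_k/k! (1-s)^k = s^{n-j}`. Finally `(-1/a)^j s^{n-j} = s^n (-1/(a s))^j`.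
-/

lemma poch_add (b : ℝ) (j k : ℕ) : poch b (j + k) = poch b j * poch (b + j) k := by
  unfold poch
  rw [prod_range_add]
  congr 1
  refine prod_congr rfl fun i _ => ?_
  push_cast
  ring

lemma poch_neg_natCast_eq_zero {m j : ℕ} (h : m < j) : poch (-(m : ℝ)) j = 0 :=
  prod_eq_zero (mem_range.2 h) (by simp)

lemma poch_neg_natCast (m k : ℕ) :
    poch (-(m : ℝ)) k = (-1) ^ k * (m.descFactorial k : ℝ) := by
  induction k with
  | zero => simp [poch]
  | succ k ih =>
    rw [poch, prod_range_succ, ← poch, ih, Nat.descFactorial_succ]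
    rcases lt_or_ge k m with h | h
    · push_cast [Nat.cast_sub h.le]
      ring
    · rcases h.lt_or_eq with h | rfl
      · simp [Nat.descFactorial_eq_zero_iff_lt.2 h]
      · simp

lemma poch_neg_natCast_div_factorial (m k : ℕ) :
    poch (-(m : ℝ)) k / (k.factorial : ℝ) = (-1) ^ k * (m.choose k : ℝ) := by
  rw [poch_neg_natCast, Nat.descFactorial_eq_factorial_mul_choose]
  push_cast
  field_simp

lemma sum_poch_neg_natCast_div_factorial_mul_pow {m N : ℕ} (h : m ≤ N) (z : ℝ) :
    ∑ k ∈ range (N + 1), poch (-(m : ℝ)) k / (k.factorial : ℝ) * z ^ k = (1 - z) ^ m := by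
  rw [sub_eq_neg_add, add_pow, ← sum_subset (range_subset_range.2 (by omega : m + 1 ≤ N + 1))]
  · refine sum_congr rfl fun k _ => ?_
    rw [poch_neg_natCast_div_factorial, one_pow, neg_pow]
    ring
  · intro k _ hk
    rw [poch_neg_natCast_eq_zero (by simpa using hk)]
    ring

lemma charlierC_eq_sum_range {m N : ℕ} (h : m ≤ N) (x a : ℝ) :
    charlierC m x a = ∑ j ∈ range (N + 1),
      poch (-(m : ℝ)) j * poch (-x) j / (j.factorial : ℝ) * (-1 / a) ^ j := by
  refine sum_subset (range_subset_range.2 (by omega)) fun j _ hj => ?_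
  rw [poch_neg_natCast_eq_zero (by simpa using hj)]
  ring

lemma poch_neg_natCast_mul_poch_sub {n j k : ℕ} (hj : j ≤ n) (hk : k ≤ n) :
    poch (-(n : ℝ)) k * poch (-((n - k : ℕ) : ℝ)) j
      = poch (-(n : ℝ)) j * poch (-((n - j : ℕ) : ℝ)) k := by
  have hsub : ∀ i ≤ n, -((n - i : ℕ) : ℝ) = -(n : ℝ) + i := fun i hi => by
    push_cast [Nat.cast_sub hi]
    ring
  rw [hsub k hk, hsub j hj, ← poch_add, ← poch_add, add_comm]

lemma sum_poch_mul_poch_sub_mul_one_sub_pow (n j : ℕ) (hj : j ≤ n) (x a s : ℝ) :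
    ∑ k ∈ range (n + 1), poch (-(n : ℝ)) k / (k.factorial : ℝ) *
        (poch (-((n - k : ℕ) : ℝ)) j * poch (-x) j / (j.factorial : ℝ) * (-1 / a) ^ j) *
        (1 - s) ^ k
      = poch (-(n : ℝ)) j * poch (-x) j / (j.factorial : ℝ) * (-1 / a) ^ j * s ^ (n - j) := by
  calc _ = ∑ k ∈ range (n + 1),
        poch (-(n : ℝ)) j * poch (-x) j / (j.factorial : ℝ) * (-1 / a) ^ j *
          (poch (-((n - j : ℕ) : ℝ)) k / (k.factorial : ℝ) * (1 - s) ^ k) := by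
        refine sum_congr rfl fun k hk => ?_
        have hswap := poch_neg_natCast_mul_poch_sub hj (Nat.lt_succ_iff.1 (mem_range.1 hk))
        linear_combination (poch (-x) j / (j.factorial : ℝ) * (-1 / a) ^ j *
          (1 - s) ^ k / (k.factorial : ℝ)) * hswap
    _ = _ := by
        rw [← mul_sum, sum_poch_neg_natCast_div_factorial_mul_pow (Nat.sub_le n j),
          sub_sub_cancel]

lemma pow_mul_charlierC_mul {s : ℝ} (hs : s ≠ 0) (n : ℕ) (x a : ℝ) :
    s ^ n * charlierC n x (a * s) = ∑ j ∈ range (n + 1),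
      poch (-(n : ℝ)) j * poch (-x) j / (j.factorial : ℝ) * (-1 / a) ^ j * s ^ (n - j) := by
  rw [charlierC, mul_sum]
  refine sum_congr rfl fun j hj => ?_
  have hpow : s ^ n = s ^ (n - j) * s ^ j :=
    (pow_sub_mul_pow s (Nat.lt_succ_iff.1 (mem_range.1 hj))).symm
  rw [hpow, div_mul_eq_div_div, div_pow]
  field_simp

lemma sum_poch_mul_charlierC_mul_one_sub_pow {s : ℝ} (hs : s ≠ 0) (n : ℕ) (x a : ℝ) :
    ∑ k ∈ range (n + 1),
        poch (-(n : ℝ)) k / (k.factorial : ℝ) * charlierC (n - k) x a * (1 - s) ^ k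
      = s ^ n * charlierC n x (a * s) := by
  calc _ = ∑ k ∈ range (n + 1), ∑ j ∈ range (n + 1),
          poch (-(n : ℝ)) k / (k.factorial : ℝ) *
            (poch (-((n - k : ℕ) : ℝ)) j * poch (-x) j / (j.factorial : ℝ) * (-1 / a) ^ j) *
            (1 - s) ^ k := by
        refine sum_congr rfl fun k _ => ?_
        rw [charlierC_eq_sum_range (Nat.sub_le n k), mul_sum, sum_mul]
    _ = ∑ j ∈ range (n + 1),
          poch (-(n : ℝ)) j * poch (-x) j / (j.factorial : ℝ) * (-1 / a) ^ j * s ^ (n - j) := by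
        rw [sum_comm]
        exact sum_congr rfl fun j hj =>
          sum_poch_mul_poch_sub_mul_one_sub_pow n j (Nat.lt_succ_iff.1 (mem_range.1 hj)) x a s
    _ = s ^ n * charlierC n x (a * s) := (pow_mul_charlierC_mul hs n x a).symm

theorem charlier_toda_expansion_first_general (a : ℝ) (n : ℕ) (t : ℝ) (x : ℝ) :
    ∑ k ∈ Finset.range (n + 1),
        poch (-(n : ℝ)) k / (k.factorial : ℝ) * charlierC (n - k) x a *
          Real.exp (n * t) * (1 - Real.exp (-t)) ^ k =
      charlierC n x (a * Real.exp (-t)) := by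
  have hexp : Real.exp (n * t) * Real.exp (-t) ^ n = 1 := by
    rw [← Real.exp_nat_mul, ← Real.exp_add, mul_neg, add_neg_cancel, Real.exp_zero]
  calc _ = Real.exp (n * t) * ∑ k ∈ range (n + 1),
          poch (-(n : ℝ)) k / (k.factorial : ℝ) * charlierC (n - k) x a *
            (1 - Real.exp (-t)) ^ k := by
        rw [mul_sum]
        exact sum_congr rfl fun k _ => by ring
    _ = charlierC n x (a * Real.exp (-t)) := by
        rw [sum_poch_mul_charlierC_mul_one_sub_pow (Real.exp_pos _).ne', ← mul_assoc, hexp,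
          one_mul]

theorem charlier_toda_expansion_first (a : ℝ) (ha : 0 < a) (n : ℕ) (t : ℝ) (x : ℝ) :
    ∑ k ∈ Finset.range (n + 1),
        poch (-(n : ℝ)) k / (k.factorial : ℝ) * charlierC (n - k) x a *
          Real.exp (n * t) * (1 - Real.exp (-t)) ^ k =
      charlierC n x (a * Real.exp (-t)) :=
  charlier_toda_expansion_first_general a n t x
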